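/- Let Σ(P), Σ(Q) be positive systems for Σ with P ⪰ Q, and let X ∈ 𝔞_q satisfy α(X) ≠ 0 for all α ∈ Σ(P) \ 𝔞_h* and α(X) > 0 for all α ∈ Σ(P,σθ). Then: (i) α(X) ≠ 0 for all α ∈ Σ(Q) \ 𝔞_h*; (ii) α(X) > 0 for all α ∈ Σ(Q,σθ); and (iii) every α ∈ Σ(Q) with α(X) > 0 belongs to Σ(P), i.e. {α ∈ Σ(Q) : α(X) > 0} ⊆ {α ∈ Σ(P) : α(X) > 0}. (This is the root-set form of the inclusion N_{Q,X} ⊆ N_{P,X} of unipotent groups.) -/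
import Mathlib


/-- `P` is a positive system for the root set `S`: there is `X ∈ V` on which no root of `S`
vanishes, such that `P` is the set of roots of `S` that are positive on `X`. -/
def IsPosSystem {V : Type*} [AddCommGroup V] [Module ℝ V]
    (S P : Set (V →ₗ[ℝ] ℝ)) : Prop :=
  ∃ X : V, (∀ α ∈ S, α X ≠ 0) ∧ P = {α | α ∈ S ∧ 0 < α X}

/-- `Σ(P, σ) = Σ(P) ∩ σ·Σ(P)`, where `σ` acts on functionals by `λ ↦ λ ∘ σ`. -/
def rootsSigma {V : Type*} [AddCommGroup V] [Module ℝ V]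
    (σ : V →ₗ[ℝ] V) (P : Set (V →ₗ[ℝ] ℝ)) : Set (V →ₗ[ℝ] ℝ) :=
  P ∩ ((fun α => α.comp σ) '' P)

/-- `Σ(P, σθ) = Σ(P) ∩ σθ·Σ(P)`, where `σθ` acts on functionals by `λ ↦ -(λ ∘ σ)`. -/
def rootsSigmaTheta {V : Type*} [AddCommGroup V] [Module ℝ V]
    (σ : V →ₗ[ℝ] V) (P : Set (V →ₗ[ℝ] ℝ)) : Set (V →ₗ[ℝ] ℝ) :=
  P ∩ ((fun α => -(α.comp σ)) '' P)

/-- `𝔞_h* = {λ : λ ∘ σ = λ}`, the functionals fixed by `σ`. -/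
def ahStar {V : Type*} [AddCommGroup V] [Module ℝ V] (σ : V →ₗ[ℝ] V) :
    Set (V →ₗ[ℝ] ℝ) :=
  {l | l.comp σ = l}

/-- `𝔞_q`, the `-1` eigenspace of `σ` on `V`. -/
def aqSet {V : Type*} [AddCommGroup V] [Module ℝ V] (σ : V →ₗ[ℝ] V) : Set V :=
  {X | σ X = -X}

/-- The partial ordering `P ⪰ Q`: `Σ(Q,σθ) ⊆ Σ(P,σθ)` and `Σ(P,σ) ⊆ Σ(Q,σ)`. -/
def Dominates {V : Type*} [AddCommGroup V] [Module ℝ V]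
    (σ : V →ₗ[ℝ] V) (P Q : Set (V →ₗ[ℝ] ℝ)) : Prop :=
  rootsSigmaTheta σ Q ⊆ rootsSigmaTheta σ P ∧ rootsSigma σ P ⊆ rootsSigma σ Q

/-- If `P ⪰ Q` and `X ∈ 𝔞_q` is regular for `Σ(P) \ 𝔞_h*` and positive on `Σ(P,σθ)`, then
the same holds with `Q` in place of `P`, and `{α ∈ Σ(Q) : α(X) > 0} ⊆ {α ∈ Σ(P) : α(X) > 0}`
(the root-set form of `N_{Q,X} ⊆ N_{P,X}`). -/
theorem dominates_regular_element_transfer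
    {V : Type*} [AddCommGroup V] [Module ℝ V] [FiniteDimensional ℝ V]
    (σ : V →ₗ[ℝ] V) (hσ : ∀ X, σ (σ X) = X)
    (S : Set (V →ₗ[ℝ] ℝ)) (hSfin : S.Finite) (hS0 : (0 : V →ₗ[ℝ] ℝ) ∉ S)
    (hSneg : ∀ α ∈ S, -α ∈ S) (hSσ : ∀ α ∈ S, α.comp σ ∈ S)
    (P Q : Set (V →ₗ[ℝ] ℝ)) (hP : IsPosSystem S P) (hQ : IsPosSystem S Q)
    (hPQ : Dominates σ P Q)
    (X : V) (hXq : X ∈ aqSet σ)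
    (hXreg : ∀ α ∈ P \ ahStar σ, α X ≠ 0)
    (hXpos : ∀ α ∈ rootsSigmaTheta σ P, 0 < α X) :
    (∀ α ∈ Q \ ahStar σ, α X ≠ 0) ∧
      (∀ α ∈ rootsSigmaTheta σ Q, 0 < α X) ∧
      {α | α ∈ Q ∧ 0 < α X} ⊆ {α | α ∈ P ∧ 0 < α X} := by
  obtain ⟨XP, hXPreg, hPdef⟩ := hP
  obtain ⟨XQ, hXQreg, hQdef⟩ := hQ
  have hPS : P ⊆ S := by rw [hPdef]; intro a ha; exact ha.1
  have hQS : Q ⊆ S := by rw [hQdef]; intro a ha; exact ha.1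
  have hnegP : ∀ α ∈ S, α ∉ P → -α ∈ P := by
    intro α hα hnP
    rw [hPdef] at hnP ⊢
    refine ⟨hSneg α hα, ?_⟩
    have hne := hXPreg α hα
    simp only [LinearMap.neg_apply]
    rcases lt_trichotomy (α XP) 0 with h | h | h
    · linarith
    · exact absurd h hne
    · exact absurd ⟨hα, h⟩ hnP
  have hah : ∀ α : V →ₗ[ℝ] ℝ, α ∈ ahStar σ → α X = 0 := by
    intro α hα
    have h1 : (α.comp σ) X = α X := by rw [hα]
    have h2 : σ X = -X := hXq
    simp only [LinearMap.comp_apply, h2, map_neg] at h1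
    linarith
  refine ⟨?_, ?_, ?_⟩
  · rintro α ⟨hαQ, hαh⟩ h0
    by_cases hαP : α ∈ P
    · exact hXreg α ⟨hαP, hαh⟩ h0
    · have hn : -α ∈ P := hnegP α (hQS hαQ) hαP
      have hnh : -α ∉ ahStar σ := by
        intro h
        apply hαh
        have h' : -(α.comp σ) = -α := by
          have hm : (-α).comp σ = -α := h
          rwa [LinearMap.neg_comp] at hm
        exact neg_injective h'
      exact hXreg (-α) ⟨hn, hnh⟩ (by simp [h0])
  · exact fun α hα => hXpos α (hPQ.1 hα)
  · rintro α ⟨hαQ, hαX⟩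
    by_cases hαP : α ∈ P
    · exact ⟨hαP, hαX⟩
    exfalso
    have hβP : -α ∈ P := hnegP α (hQS hαQ) hαP
    have hβX : (-α) X < 0 := by simpa using hαX
    have hβσS : (-α).comp σ ∈ S := hSσ _ (hPS hβP)
    by_cases hc : (-α).comp σ ∈ P
    · have hβQ : -α ∈ rootsSigma σ Q := by
        refine hPQ.2 ⟨hβP, ⟨(-α).comp σ, hc, ?_⟩⟩
        ext x; simp [hσ x]
      have hβQ' : -α ∈ Q := hβQ.1
      rw [hQdef] at hαQ hβQ'
      have h1 := hαQ.2
      have h2 := hβQ'.2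
      simp only [LinearMap.neg_apply] at h2
      linarith
    · have hc' : -((-α).comp σ) ∈ P := hnegP _ hβσS hc
      have hmem : -α ∈ rootsSigmaTheta σ P := by
        refine ⟨hβP, ⟨-((-α).comp σ), hc', ?_⟩⟩
        ext x; simp [hσ x]
      have := hXpos _ hmem
      linarith
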